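/- For every simple random walk (X_t) on W started at ∅, almost surely the horizontal positions of X_t converge in the circle ℝ/ℤ as t → ∞. Moreover, the topological support of the law of the limit (the harmonic measure ν_h) is all of ℝ/ℤ. -/

import Mathlib

open MeasureTheory Filter Topology
open scoped ENNReal Classical

instance (n : ℕ) : NeZero (2 ^ n) := ⟨pow_ne_zero n two_ne_zero⟩

/-- The vertex set of the wrapped dyadic graph `W`: pairs `(n, v)` with `v : ZMod (2^n)`. -/
abbrev WVert := (n : ℕ) × ZMod (2 ^ n)

/-- The root `∅` of `W`. -/
def wroot : WVert := ⟨0, 0⟩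

/-- The multiset of targets (with multiplicity) of the moves of simple random walk on `W`
from a given vertex. -/
def wTargets : WVert → Multiset WVert
  | ⟨0, _⟩ => {wroot, wroot, ⟨1, 0⟩}
  | ⟨n + 1, v⟩ =>
    if v.val % 2 = 0 then
      {⟨n + 1, v + 1⟩, ⟨n + 1, v - 1⟩, ⟨n + 2, ((2 * v.val : ℕ) : ZMod (2 ^ (n + 2)))⟩,
        ⟨n, ((v.val / 2 : ℕ) : ZMod (2 ^ n))⟩}
    else
      {⟨n + 1, v + 1⟩, ⟨n + 1, v - 1⟩, ⟨n + 2, ((2 * v.val : ℕ) : ZMod (2 ^ (n + 2)))⟩}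

/-- The transition probabilities of simple random walk on `W`
(probabilities of coinciding targets are added). -/
noncomputable def wP (u w : WVert) : ℝ≥0∞ :=
  ((wTargets u).count w : ℝ≥0∞) / ((wTargets u).card : ℝ≥0∞)

/-- `X` is a simple random walk on `W`, defined on `(Ω, P)`, started at `u₀`. -/
def IsWalkW {Ω : Type} [MeasurableSpace Ω] (P : Measure Ω) (X : ℕ → Ω → WVert)
    (u₀ : WVert) : Prop :=
  (∀ t, Measurable (X t)) ∧ P {ω | X 0 ω = u₀} = 1 ∧
    ∀ t (u w : WVert),
      P {ω | X (t + 1) ω = w ∧ X t ω = u} = wP u w * P {ω | X t ω = u}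

/-- The horizontal position `v̄ / 2ⁿ mod 1` of a vertex, as a point of `ℝ/ℤ`. -/
noncomputable def wpos (u : WVert) : UnitAddCircle :=
  (((u.2.val : ℝ) / 2 ^ u.1 : ℝ) : UnitAddCircle)


-- ===== auxiliary development =====

instance : DiscreteMeasurableSpace WVert := by
  constructor
  intro s
  rw [MeasurableSpace.measurableSet_iInf]
  intro n
  exact MeasurableSet.of_discrete (s := Sigma.mk n ⁻¹' s)

-- geometry helpers
lemma circle_coe_nat_add (a : ℝ) (k : ℕ) : ((a + k : ℝ) : UnitAddCircle) = (a : UnitAddCircle) := by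
  have h : ((a + k : ℝ) : UnitAddCircle) = (a : UnitAddCircle) + ((k:ℝ) : UnitAddCircle) := rfl
  rw [h]
  have : (((k:ℕ):ℝ) : UnitAddCircle) = 0 := by
    rw [AddCircle.coe_eq_zero_iff]; exact ⟨k, by simp⟩
  rw [this, add_zero]

lemma circle_dist_coe (a b : ℝ) : dist (a : UnitAddCircle) (b : UnitAddCircle) ≤ |a - b| := by
  rw [dist_eq_norm]
  have h : ((a : UnitAddCircle) - b) = ((a - b : ℝ) : UnitAddCircle) := rfl
  rw [h]
  simpa using QuotientAddGroup.norm_mk_le_norm (S := AddSubgroup.zmultiples (1:ℝ)) (m := a - b)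

lemma circle_coe_mod (x m : ℕ) (hm : 0 < m) :
    ((((x % m : ℕ) : ℝ)) / (m:ℝ) : ℝ) = ((((x:ℝ)) / (m:ℝ) : ℝ) : UnitAddCircle) := by
  have hm' : (m:ℝ) ≠ 0 := by positivity
  have hx : (x:ℝ) = ((x % m : ℕ) : ℝ) + (m:ℝ) * ((x / m : ℕ) : ℝ) := by
    have h := Nat.mod_add_div x m
    have h' : ((x % m + m * (x/m) : ℕ) : ℝ) = (x:ℝ) := by rw [h]
    push_cast at h'
    linarith
  have h2 : ((x:ℝ))/(m:ℝ) = ((x % m : ℕ) : ℝ)/(m:ℝ) + ((x / m : ℕ) : ℝ) := by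
    rw [hx]; field_simp
  rw [h2, circle_coe_nat_add]

lemma val_zmod_one (v : ZMod (2^0)) : v.val = 0 := by
  have h : (2:ℕ)^0 = 1 := pow_zero 2
  revert v; rw [h]; intro v
  have : v = 0 := Subsingleton.elim v 0
  rw [this]; rfl

lemma one_lt_m (n : ℕ) : 1 < 2^(n+1) := by
  have : 2^1 ≤ 2^(n+1) := Nat.pow_le_pow_right (by norm_num) (by omega)
  omega

lemma val_add_one {n : ℕ} (v : ZMod (2^(n+1))) : (v+1).val = (v.val + 1) % 2^(n+1) := by
  have h1 : (1 : ZMod (2^(n+1))).val = 1 := ZMod.val_one_eq_one_mod _ ▸ Nat.mod_eq_of_lt (one_lt_m n)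
  rw [ZMod.val_add, h1]

lemma val_sub_one {n : ℕ} (v : ZMod (2^(n+1))) : (v-1).val = (v.val + (2^(n+1) - 1)) % 2^(n+1) := by
  have hm : 1 < 2^(n+1) := one_lt_m n
  have hneg : (-1 : ZMod (2^(n+1))) = ((2^(n+1) - 1 : ℕ) : ZMod (2^(n+1))) := by
    have : ((2^(n+1) - 1 : ℕ) : ZMod (2^(n+1))) = (2^(n+1) : ℕ) - 1 := by
      push_cast [Nat.cast_sub Nat.one_le_two_pow]; ring
    rw [this, ZMod.natCast_self]; ring
  have hval : (-1 : ZMod (2^(n+1))).val = 2^(n+1) - 1 := by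
    rw [hneg, ZMod.val_natCast, Nat.mod_eq_of_lt (by omega)]
  rw [sub_eq_add_neg, ZMod.val_add, hval]

lemma val_add_one_mod_two {n : ℕ} (v : ZMod (2^(n+1))) : (v+1).val % 2 = (v.val + 1) % 2 := by
  rw [val_add_one, Nat.mod_mod_of_dvd _ ⟨2^n, by ring⟩]

lemma val_sub_one_mod_two {n : ℕ} (v : ZMod (2^(n+1))) : (v-1).val % 2 = (v.val + 1) % 2 := by
  have := val_add_one_mod_two (v - 1)
  rw [sub_add_cancel] at this
  omega

lemma val_up {n : ℕ} (v : ZMod (2^(n+1))) :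
    ((2 * v.val : ℕ) : ZMod (2^(n+2))).val = 2 * v.val := by
  have hv : v.val < 2^(n+1) := ZMod.val_lt v
  have h : 2^(n+2) = 2 * 2^(n+1) := by ring
  rw [ZMod.val_natCast, Nat.mod_eq_of_lt (by omega)]

lemma val_down {n : ℕ} (v : ZMod (2^(n+1))) :
    ((v.val / 2 : ℕ) : ZMod (2^n)).val = v.val / 2 := by
  have hv : v.val < 2^(n+1) := ZMod.val_lt v
  have h : 2^(n+1) = 2^n * 2 := by ring
  rw [ZMod.val_natCast, Nat.mod_eq_of_lt (by omega)]

lemma wpos_eq (u : WVert) : wpos u = (((u.2.val : ℝ) / 2 ^ u.1 : ℝ) : UnitAddCircle) := rfl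

lemma wpos_of_val {j : ℕ} (x : ZMod (2^j)) (y : ℕ) (hx : x.val = y % 2^j) :
    wpos ⟨j, x⟩ = (((y:ℝ))/(2:ℝ)^j : ℝ) := by
  have hm : (0:ℕ) < 2^j := by positivity
  have hc : ((2:ℝ))^j = ((2^j : ℕ):ℝ) := by push_cast; ring
  rw [wpos_eq, hx, hc, circle_coe_mod y (2^j) hm, ← hc]

lemma wpos_self {j : ℕ} (x : ZMod (2^j)) : wpos ⟨j, x⟩ = (((x.val:ℝ))/(2:ℝ)^j : ℝ) :=
  wpos_of_val x x.val (Nat.mod_eq_of_lt (ZMod.val_lt x)).symm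

lemma wpos_step {u w : WVert} (h : w ∈ wTargets u) : dist (wpos w) (wpos u) ≤ (1/2:ℝ)^u.1 := by
  obtain ⟨k, v⟩ := u
  match k with
  | 0 =>
    simp only [wTargets, Multiset.insert_eq_cons, Multiset.mem_cons, Multiset.mem_singleton] at h
    have h0 : wpos (⟨0, v⟩ : WVert) = ((0:ℝ) : UnitAddCircle) := by
      rw [wpos_self, val_zmod_one]; norm_num
    have hr : wpos wroot = ((0:ℝ) : UnitAddCircle) := by
      show wpos ⟨0, (0 : ZMod (2^0))⟩ = _
      rw [wpos_self, val_zmod_one]; norm_num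
    have h1 : wpos (⟨1, 0⟩ : WVert) = ((0:ℝ) : UnitAddCircle) := by
      have : ((0 : ZMod (2^1))).val = 0 := rfl
      rw [wpos_self, this]; norm_num
    rcases h with rfl | rfl | rfl
    · rw [hr, h0]; simp
    · rw [hr, h0]; simp
    · rw [h1, h0]; simp
  | n + 1 =>
    have hmR : ((2:ℝ))^(n+1) ≠ 0 := by positivity
    have hbound : (1:ℝ)/2^(n+1) ≤ (1/2:ℝ)^(n+1) := by
      rw [div_pow, one_pow]
    have hself := wpos_self v
    have hA : dist (wpos (⟨n+1, v+1⟩ : WVert)) (wpos (⟨n+1, v⟩ : WVert)) ≤ (1/2:ℝ)^(n+1) := by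
      rw [wpos_of_val (v+1) (v.val+1) (val_add_one v), hself]
      refine le_trans (circle_dist_coe _ _) ?_
      push_cast
      rw [add_div, add_sub_cancel_left, abs_of_nonneg (by positivity)]
      exact hbound
    have hB : dist (wpos (⟨n+1, v-1⟩ : WVert)) (wpos (⟨n+1, v⟩ : WVert)) ≤ (1/2:ℝ)^(n+1) := by
      have e1 : wpos (⟨n+1, v-1⟩ : WVert) = ((((v.val:ℝ) - 1)/(2:ℝ)^(n+1) : ℝ) : UnitAddCircle) := by
        rw [wpos_of_val (v-1) _ (val_sub_one v)]
        have e2 : (((v.val + (2^(n+1)-1) : ℕ)):ℝ) = (v.val:ℝ) + 2^(n+1) - 1 := by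
          rw [Nat.cast_add, Nat.cast_sub Nat.one_le_two_pow]
          push_cast
          ring
        rw [e2]
        have e3 : ((v.val:ℝ) + 2^(n+1) - 1)/(2:ℝ)^(n+1) = ((v.val:ℝ) - 1)/(2:ℝ)^(n+1) + ((1:ℕ):ℝ) := by
          field_simp
          ring
        rw [e3, circle_coe_nat_add]
      rw [e1, hself]
      refine le_trans (circle_dist_coe _ _) ?_
      rw [sub_div, sub_sub_cancel_left, abs_neg, abs_of_nonneg (by positivity)]
      exact hbound
    have hC : dist (wpos (⟨n+2, ((2 * v.val : ℕ) : ZMod (2 ^ (n + 2)))⟩ : WVert)) (wpos (⟨n+1, v⟩ : WVert)) ≤ (1/2:ℝ)^(n+1) := by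
      have hv : v.val < 2^(n+1) := ZMod.val_lt v
      have hlt : 2 * v.val < 2^(n+2) := by
        have : 2^(n+2) = 2 * 2^(n+1) := by ring
        omega
      have e1 : wpos (⟨n+2, ((2 * v.val : ℕ) : ZMod (2 ^ (n + 2)))⟩ : WVert)
          = ((((2*v.val:ℕ):ℝ))/(2:ℝ)^(n+2) : ℝ) := by
        refine wpos_of_val _ _ ?_
        rw [ZMod.val_natCast]
      have e2 : (((2*v.val:ℕ)):ℝ)/(2:ℝ)^(n+2) = (v.val:ℝ)/(2:ℝ)^(n+1) := by
        push_cast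
        rw [div_eq_div_iff (by positivity) (by positivity)]
        ring
      rw [e1, e2, hself]
      simp
    have hD : ∀ hpar : v.val % 2 = 0, dist (wpos (⟨n, ((v.val / 2 : ℕ) : ZMod (2 ^ n))⟩ : WVert)) (wpos (⟨n+1, v⟩ : WVert)) ≤ (1/2:ℝ)^(n+1) := by
      intro hpar
      have hv : v.val < 2^(n+1) := ZMod.val_lt v
      have e1 : wpos (⟨n, ((v.val / 2 : ℕ) : ZMod (2 ^ n))⟩ : WVert)
          = ((((v.val/2:ℕ):ℝ))/(2:ℝ)^n : ℝ) := by
        refine wpos_of_val _ _ ?_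
        rw [ZMod.val_natCast]
      have h2 : (v.val / 2) * 2 = v.val := Nat.div_mul_cancel (Nat.dvd_of_mod_eq_zero hpar)
      have h3 : ((v.val/2 : ℕ) : ℝ) * 2 = (v.val : ℝ) := by
        have := congrArg (fun t : ℕ => (t:ℝ)) h2
        push_cast at this
        linarith
      have e2 : (((v.val/2:ℕ)):ℝ)/(2:ℝ)^n = (v.val:ℝ)/(2:ℝ)^(n+1) := by
        rw [div_eq_div_iff (by positivity) (by positivity), ← h3]
        ring
      rw [e1, e2, hself]
      simp
    simp only [wTargets] at h
    split_ifs at h with hpar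
    · simp only [Multiset.insert_eq_cons, Multiset.mem_cons, Multiset.mem_singleton] at h
      rcases h with rfl | rfl | rfl | rfl
      · exact hA
      · exact hB
      · exact hC
      · exact hD hpar
    · simp only [Multiset.insert_eq_cons, Multiset.mem_cons, Multiset.mem_singleton] at h
      rcases h with rfl | rfl | rfl
      · exact hA
      · exact hB
      · exact hC

open scoped NNReal

noncomputable def fNN : WVert → ℝ≥0 := fun u => (if u.2.val % 2 = 0 then 13/12 else 1) * (3/4)^u.1
noncomputable def fE (u : WVert) : ℝ≥0∞ := (fNN u : ℝ≥0∞)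

lemma fNN_le (u : WVert) : fNN u ≤ (13/12) * (3/4)^u.1 := by
  unfold fNN
  split_ifs
  · exact le_refl _
  · gcongr ?_ * _
    · rw [← NNReal.coe_le_coe]; push_cast; norm_num

lemma le_fNN (u : WVert) : ((3:ℝ≥0)/4)^u.1 ≤ fNN u := by
  unfold fNN
  split_ifs
  · nth_rewrite 1 [← one_mul ((3/4:ℝ≥0)^u.1)]
    gcongr ?_ * _
    · rw [← NNReal.coe_le_coe]; push_cast; norm_num
  · rw [one_mul]

lemma fE_ne_top (u : WVert) : fE u ≠ ⊤ := ENNReal.coe_ne_top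

lemma tsum_count_mul (T : Multiset WVert) (g : WVert → ℝ≥0∞) :
    ∑' w, (T.count w : ℝ≥0∞) * g w = (T.map g).sum := by
  induction T using Multiset.induction with
  | empty => simp
  | cons a s ih =>
    simp only [Multiset.count_cons, Multiset.map_cons, Multiset.sum_cons]
    have : ∀ w, (((s.count w + if w = a then 1 else 0 : ℕ)) : ℝ≥0∞) * g w
        = (s.count w : ℝ≥0∞) * g w + (if w = a then g w else 0) := by
      intro w; split_ifs <;> push_cast <;> ring
    rw [tsum_congr this, ENNReal.tsum_add, ih]
    have h2 : ∀ w, (if w = a then g w else 0) = (if w = a then g a else 0) := by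
      intro w; split_ifs with h <;> simp [h]
    rw [tsum_congr h2, tsum_ite_eq]
    ring

lemma wTargets_card (u : WVert) : (wTargets u).card = 3 ∨ (wTargets u).card = 4 := by
  obtain ⟨k, v⟩ := u
  match k with
  | 0 => left; rfl
  | n+1 =>
    simp only [wTargets]
    split_ifs <;> [right; left] <;> rfl

lemma wTargets_card_ne_zero (u : WVert) : ((wTargets u).card : ℝ≥0∞) ≠ 0 := by
  rcases wTargets_card u with h | h <;> rw [h] <;> norm_num

lemma wTargets_card_ne_top (u : WVert) : ((wTargets u).card : ℝ≥0∞) ≠ ⊤ := by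
  exact ENNReal.natCast_ne_top _

lemma wP_mul_tsum (u : WVert) (g : WVert → ℝ≥0∞) :
    ∑' w, wP u w * g w = (((wTargets u).map g).sum) / ((wTargets u).card : ℝ≥0∞) := by
  unfold wP
  have : ∀ w, (((wTargets u).count w : ℝ≥0∞) / ((wTargets u).card : ℝ≥0∞)) * g w
      = (((wTargets u).count w : ℝ≥0∞) * g w) * (((wTargets u).card : ℝ≥0∞))⁻¹ := by
    intro w; rw [div_eq_mul_inv]; ring
  rw [tsum_congr this, ENNReal.tsum_mul_right, tsum_count_mul, div_eq_mul_inv]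

lemma wP_total (u : WVert) : ∑' w, wP u w = 1 := by
  have h := wP_mul_tsum u (fun _ => 1)
  simp only [mul_one] at h
  rw [h, Multiset.map_const', Multiset.sum_replicate, nsmul_eq_mul, mul_one]
  exact ENNReal.div_self (wTargets_card_ne_zero u) (wTargets_card_ne_top u)

lemma fNN_odd {j : ℕ} (x : ZMod (2^j)) (h : x.val % 2 = 1) : fNN ⟨j,x⟩ = (3/4:ℝ≥0)^j := by
  unfold fNN; simp [h]

lemma fNN_even {j : ℕ} (x : ZMod (2^j)) (h : x.val % 2 = 0) : fNN ⟨j,x⟩ = (13/12) * (3/4:ℝ≥0)^j := by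
  unfold fNN; simp [h]

lemma key_sum (u : WVert) :
    ((wTargets u).map fNN).sum ≤ (143/144 : ℝ≥0) * fNN u * ((wTargets u).card : ℝ≥0) := by
  obtain ⟨k, v⟩ := u
  match k with
  | 0 =>
    have hr : fNN wroot = 13/12 := by
      simpa [wroot] using fNN_even (0 : ZMod (2^0)) (by rw [val_zmod_one])
    have h1 : fNN ⟨1, (0 : ZMod (2^1))⟩ = 13/12 * (3/4) := by
      have h0 : ((0 : ZMod (2^1))).val % 2 = 0 := by rw [ZMod.val_zero]
      rw [fNN_even _ h0, pow_one]
    have hu : fNN ⟨0, v⟩ = 13/12 := by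
      simpa using fNN_even v (by rw [val_zmod_one])
    show (Multiset.map fNN {wroot, wroot, ⟨1,0⟩}).sum ≤ _ * fNN (⟨0, v⟩ : WVert) * ((Multiset.card {wroot, wroot, (⟨1,0⟩ : WVert)} : ℕ) : ℝ≥0)
    simp only [Multiset.insert_eq_cons, Multiset.map_cons, Multiset.sum_cons,
      Multiset.map_singleton, Multiset.sum_singleton, Multiset.card_cons, Multiset.card_singleton]
    rw [hr, h1, hu]
    rw [← NNReal.coe_le_coe]
    push_cast
    norm_num
  | n + 1 =>
    have hcard := wTargets_card (⟨n+1, v⟩ : WVert)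
    show (Multiset.map fNN (wTargets ⟨n+1, v⟩)).sum ≤ _
    rcases Nat.even_or_odd v.val with he | ho
    · have hpar : v.val % 2 = 0 := Nat.even_iff.mp he
      have h1 : fNN ⟨n+1, v+1⟩ = (3/4:ℝ≥0)^(n+1) :=
        fNN_odd _ (by rw [val_add_one_mod_two]; omega)
      have h2 : fNN ⟨n+1, v-1⟩ = (3/4:ℝ≥0)^(n+1) :=
        fNN_odd _ (by rw [val_sub_one_mod_two]; omega)
      have h3 : fNN ⟨n+2, ((2 * v.val : ℕ) : ZMod (2 ^ (n + 2)))⟩ = 13/12 * (3/4:ℝ≥0)^(n+2) :=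
        fNN_even _ (by rw [val_up]; omega)
      have h4 : fNN ⟨n, ((v.val / 2 : ℕ) : ZMod (2 ^ n))⟩ ≤ 13/12 * (3/4:ℝ≥0)^n := fNN_le _
      have hu : fNN ⟨n+1, v⟩ = 13/12 * (3/4:ℝ≥0)^(n+1) := fNN_even _ hpar
      have hT : wTargets ⟨n+1, v⟩ = {⟨n + 1, v + 1⟩, ⟨n + 1, v - 1⟩, ⟨n + 2, ((2 * v.val : ℕ) : ZMod (2 ^ (n + 2)))⟩,
        ⟨n, ((v.val / 2 : ℕ) : ZMod (2 ^ n))⟩} := by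
        simp only [wTargets, if_pos hpar]
      rw [hT]
      simp only [Multiset.insert_eq_cons, Multiset.map_cons, Multiset.sum_cons,
        Multiset.map_singleton, Multiset.sum_singleton, Multiset.card_cons, Multiset.card_singleton]
      rw [h1, h2, h3, hu]
      have step : (3/4:ℝ≥0)^(n+1) + ((3/4:ℝ≥0)^(n+1) + (13/12 * (3/4:ℝ≥0)^(n+2) + fNN ⟨n, ((v.val / 2 : ℕ) : ZMod (2 ^ n))⟩))
          ≤ (3/4:ℝ≥0)^(n+1) + ((3/4:ℝ≥0)^(n+1) + (13/12 * (3/4:ℝ≥0)^(n+2) + 13/12 * (3/4:ℝ≥0)^n)) := by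
        gcongr
      refine le_trans step ?_
      rw [← NNReal.coe_le_coe]
      push_cast
      have e1 : (3/4:ℝ)^(n+1) = (3/4:ℝ)^n * (3/4) := pow_succ _ _
      have e2 : (3/4:ℝ)^(n+2) = (3/4:ℝ)^n * (3/4) * (3/4) := by rw [pow_succ, pow_succ]
      have hx : (0:ℝ) ≤ (3/4:ℝ)^n := by positivity
      rw [e1, e2]
      norm_num
      nlinarith [hx]
    · have hpar : v.val % 2 = 1 := Nat.odd_iff.mp ho
      have h1 : fNN ⟨n+1, v+1⟩ = 13/12 * (3/4:ℝ≥0)^(n+1) :=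
        fNN_even _ (by rw [val_add_one_mod_two]; omega)
      have h2 : fNN ⟨n+1, v-1⟩ = 13/12 * (3/4:ℝ≥0)^(n+1) :=
        fNN_even _ (by rw [val_sub_one_mod_two]; omega)
      have h3 : fNN ⟨n+2, ((2 * v.val : ℕ) : ZMod (2 ^ (n + 2)))⟩ = 13/12 * (3/4:ℝ≥0)^(n+2) :=
        fNN_even _ (by rw [val_up]; omega)
      have hu : fNN ⟨n+1, v⟩ = (3/4:ℝ≥0)^(n+1) := fNN_odd _ hpar
      have hT : wTargets ⟨n+1, v⟩ = {⟨n + 1, v + 1⟩, ⟨n + 1, v - 1⟩, ⟨n + 2, ((2 * v.val : ℕ) : ZMod (2 ^ (n + 2)))⟩} := by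
        simp only [wTargets, if_neg (by omega : ¬ v.val % 2 = 0)]
      rw [hT]
      simp only [Multiset.insert_eq_cons, Multiset.map_cons, Multiset.sum_cons,
        Multiset.map_singleton, Multiset.sum_singleton, Multiset.card_cons, Multiset.card_singleton]
      rw [h1, h2, h3, hu]
      rw [← NNReal.coe_le_coe]
      push_cast
      have e1 : (3/4:ℝ)^(n+1) = (3/4:ℝ)^n * (3/4) := pow_succ _ _
      have e2 : (3/4:ℝ)^(n+2) = (3/4:ℝ)^n * (3/4) * (3/4) := by rw [pow_succ, pow_succ]
      have hx : (0:ℝ) ≤ (3/4:ℝ)^n := by positivity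
      rw [e1, e2]
      norm_num
      nlinarith [hx]

lemma fE_step (u : WVert) : ∑' w, wP u w * fE w ≤ (143/144 : ℝ≥0∞) * fE u := by
  rw [wP_mul_tsum]
  rw [ENNReal.div_le_iff_le_mul (Or.inl (wTargets_card_ne_zero u)) (Or.inl (wTargets_card_ne_top u))]
  have hmap : ((wTargets u).map fE).sum = ((((wTargets u).map fNN).sum : ℝ≥0) : ℝ≥0∞) := by
    induction (wTargets u) using Multiset.induction with
    | empty => simp
    | cons a s ih =>
        simp only [Multiset.map_cons, Multiset.sum_cons, ENNReal.coe_add, ih]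
        rfl
  have hconst : ((143/144 : ℝ≥0) : ℝ≥0∞) = (143/144 : ℝ≥0∞) := by
    rw [ENNReal.coe_div (by norm_num)]; norm_num
  have hcardc : (((wTargets u).card : ℝ≥0) : ℝ≥0∞) = ((wTargets u).card : ℝ≥0∞) := ENNReal.coe_natCast _
  calc ((wTargets u).map fE).sum = ((((wTargets u).map fNN).sum : ℝ≥0) : ℝ≥0∞) := hmap
    _ ≤ (((143/144 : ℝ≥0) * fNN u * ((wTargets u).card : ℝ≥0) : ℝ≥0) : ℝ≥0∞) :=
        ENNReal.coe_le_coe.mpr (key_sum u)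
    _ = (143/144 : ℝ≥0∞) * fE u * ((wTargets u).card : ℝ≥0∞) := by
        rw [ENNReal.coe_mul, ENNReal.coe_mul, hconst, hcardc]
        rfl


lemma circle_coe_int_add (a : ℝ) (k : ℤ) : ((a + k : ℝ) : UnitAddCircle) = (a : UnitAddCircle) := by
  have h : ((a + k : ℝ) : UnitAddCircle) = (a : UnitAddCircle) + ((k:ℝ) : UnitAddCircle) := rfl
  rw [h]
  have : (((k:ℤ):ℝ) : UnitAddCircle) = 0 := by
    rw [AddCircle.coe_eq_zero_iff]; exact ⟨k, by simp⟩
  rw [this, add_zero]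

lemma wP_zero {u w : WVert} (h : w ∉ wTargets u) : wP u w = 0 := by
  unfold wP
  rw [Multiset.count_eq_zero.mpr h]
  simp

lemma wP_pos {u w : WVert} (h : w ∈ wTargets u) : 0 < wP u w := by
  unfold wP
  refine ENNReal.div_pos ?_ (wTargets_card_ne_top u)
  have := (Multiset.count_pos.mpr h).ne'
  exact_mod_cast this

lemma step_exp (ν : WVert → ℝ≥0∞) (g : WVert → ℝ≥0∞) (ρ' : ℝ≥0∞)
    (hg : ∀ u, ∑' w, wP u w * g w ≤ ρ' * g u) :
    ∑' w, g w * (∑' u, wP u w * ν u) ≤ ρ' * ∑' u, g u * ν u := by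
  calc ∑' w, g w * (∑' u, wP u w * ν u)
      = ∑' w, ∑' u, g w * (wP u w * ν u) := tsum_congr fun w => ENNReal.tsum_mul_left.symm
    _ = ∑' u, ∑' w, g w * (wP u w * ν u) := ENNReal.tsum_comm
    _ = ∑' u, (∑' w, wP u w * g w) * ν u := by
        refine tsum_congr fun u => ?_
        rw [← ENNReal.tsum_mul_right]
        exact tsum_congr fun w => by ring
    _ ≤ ∑' u, (ρ' * g u) * ν u := ENNReal.tsum_le_tsum fun u => mul_le_mul_left (hg u) _
    _ = ρ' * ∑' u, g u * ν u := by
        rw [← ENNReal.tsum_mul_left]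
        exact tsum_congr fun u => by ring

lemma step_total (ν : WVert → ℝ≥0∞) : ∑' w, (∑' u, wP u w * ν u) = ∑' u, ν u := by
  rw [ENNReal.tsum_comm]
  refine tsum_congr fun u => ?_
  rw [ENNReal.tsum_mul_right, wP_total, one_mul]

lemma edist_step {u w : WVert} (h : w ∈ wTargets u) : edist (wpos w) (wpos u) ≤ fE u := by
  rw [edist_dist]
  have h1 := wpos_step h
  have h2 : ((1:ℝ)/2)^u.1 ≤ ((fNN u : ℝ)) := by
    refine le_trans (pow_le_pow_left₀ (by norm_num) (by norm_num : (1:ℝ)/2 ≤ 3/4) u.1) ?_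
    have := le_fNN u
    have h3 : (((3/4:ℝ≥0))^u.1 : ℝ) ≤ ((fNN u : ℝ)) := NNReal.coe_le_coe.mpr this
    refine le_trans (le_of_eq ?_) h3
    push_cast
    norm_num
  calc ENNReal.ofReal (dist (wpos w) (wpos u)) ≤ ENNReal.ofReal ((fNN u : ℝ)) :=
        ENNReal.ofReal_le_ofReal (le_trans h1 h2)
    _ = fE u := ENNReal.ofReal_coe_nnreal

noncomputable def potG (q : UnitAddCircle) (u : WVert) : ℝ≥0∞ := edist (wpos u) q + 144 * fE u

lemma potG_superharmonic (q : UnitAddCircle) (u : WVert) :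
    ∑' w, wP u w * potG q w ≤ potG q u := by
  have split : ∀ w, wP u w * potG q w = wP u w * edist (wpos w) q + wP u w * (144 * fE w) := by
    intro w; rw [potG]; ring
  rw [tsum_congr split, ENNReal.tsum_add]
  have h1 : ∑' w, wP u w * edist (wpos w) q ≤ edist (wpos u) q + fE u := by
    have hle : ∑' w, wP u w * edist (wpos w) q ≤ ∑' w, wP u w * (edist (wpos u) q + fE u) := by
      refine ENNReal.tsum_le_tsum fun w => ?_
      by_cases hw : w ∈ wTargets u
      · refine mul_le_mul_right ?_ _
        calc edist (wpos w) q ≤ edist (wpos w) (wpos u) + edist (wpos u) q := edist_triangle _ _ _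
          _ ≤ fE u + edist (wpos u) q := add_le_add_left (edist_step hw) _
          _ = edist (wpos u) q + fE u := add_comm _ _
      · simp [wP_zero hw]
    rw [ENNReal.tsum_mul_right, wP_total, one_mul] at hle
    exact hle
  have h2 : ∑' w, wP u w * (144 * fE w) ≤ 144 * ((143/144 : ℝ≥0∞) * fE u) := by
    have : ∑' w, wP u w * (144 * fE w) = 144 * ∑' w, wP u w * fE w := by
      rw [← ENNReal.tsum_mul_left]
      exact tsum_congr fun w => by ring
    rw [this]
    exact mul_le_mul_right (fE_step u) _
  have h3 : (144 : ℝ≥0∞) * ((143/144 : ℝ≥0∞) * fE u) = 143 * fE u := by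
    rw [← mul_assoc, mul_comm (144:ℝ≥0∞) (143/144 : ℝ≥0∞),
      ENNReal.div_mul_cancel (by norm_num) (by norm_num)]
  calc ∑' (a : WVert), wP u a * edist (wpos a) q + ∑' (a : WVert), wP u a * (144 * fE a)
      ≤ (edist (wpos u) q + fE u) + 143 * fE u := by
        rw [← h3]; exact add_le_add h1 h2
    _ = potG q u := by
        rw [potG, add_assoc]
        congr 1
        calc fE u + 143 * fE u = (1 + 143) * fE u := by ring
          _ = 144 * fE u := by norm_num

noncomputable def muSeq (u₀ : WVert) : ℕ → WVert → ℝ≥0∞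
  | 0 => fun u => if u = u₀ then 1 else 0
  | (s+1) => fun w => ∑' u, wP u w * muSeq u₀ s u

lemma mem_targets_add_one {n : ℕ} (x : ZMod (2^(n+1))) :
    (⟨n+1, x+1⟩ : WVert) ∈ wTargets ⟨n+1, x⟩ := by
  simp only [wTargets]
  split_ifs <;> simp [Multiset.insert_eq_cons]

lemma mem_targets_up_zero (n : ℕ) :
    (⟨n+2, (0 : ZMod (2^(n+2)))⟩ : WVert) ∈ wTargets ⟨n+1, (0 : ZMod (2^(n+1)))⟩ := by
  have hval : ((0 : ZMod (2^(n+1)))).val = 0 := ZMod.val_zero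
  have h0 : (((2 * (0 : ZMod (2^(n+1))).val : ℕ)) : ZMod (2 ^ (n + 2))) = 0 := by
    rw [hval]; norm_num
  simp only [wTargets, hval]
  norm_num [h0, Multiset.insert_eq_cons]

lemma mem_targets_root : ((⟨1, (0 : ZMod (2^1))⟩ : WVert)) ∈ wTargets wroot := by
  show _ ∈ wTargets ⟨0, (0 : ZMod (2^0))⟩
  simp [wTargets, Multiset.insert_eq_cons]


lemma half_pow_le_fNN (u : WVert) : ((1:ℝ)/2)^u.1 ≤ ((fNN u : ℝ)) := by
  refine le_trans (pow_le_pow_left₀ (by norm_num) (by norm_num : (1:ℝ)/2 ≤ 3/4) u.1) ?_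
  have h3 : (((3/4:ℝ≥0))^u.1 : ℝ) ≤ ((fNN u : ℝ)) := NNReal.coe_le_coe.mpr (le_fNN u)
  refine le_trans (le_of_eq ?_) h3
  push_cast
  norm_num

lemma zmod_one_eq_zero (v : ZMod (2^0)) : v = 0 := by
  have h : (2:ℕ)^0 = 1 := pow_zero 2
  revert v; rw [h]; intro v
  exact Subsingleton.elim v 0

lemma reach_aux (m : ℕ → WVert → ℝ≥0∞)
    (hrec : ∀ t w, m (t+1) w = ∑' u, wP u w * m t u)
    (h0 : 0 < m 0 wroot) : ∀ u : WVert, ∃ L, 0 < m L u := by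
  have hstep : ∀ (L : ℕ) (u w : WVert), 0 < m L u → w ∈ wTargets u → 0 < m (L+1) w := by
    intro L u w hu hw
    rw [hrec]
    refine lt_of_lt_of_le ?_ (ENNReal.le_tsum u)
    exact ENNReal.mul_pos (wP_pos hw).ne' hu.ne'
  have hzero : ∀ n : ℕ, ∃ L, 0 < m L ⟨n, 0⟩ := by
    intro n
    induction n with
    | zero => exact ⟨0, h0⟩
    | succ n ih =>
      obtain ⟨L, hL⟩ := ih
      match n with
      | 0 => exact ⟨L+1, hstep L wroot _ hL mem_targets_root⟩
      | k+1 => exact ⟨L+1, hstep L _ _ hL (mem_targets_up_zero k)⟩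
  rintro ⟨n, v⟩
  match n with
  | 0 =>
    rw [zmod_one_eq_zero v]
    exact hzero 0
  | k+1 =>
    have hind : ∀ j : ℕ, ∃ L, 0 < m L ⟨k+1, ((j:ℕ) : ZMod (2^(k+1)))⟩ := by
      intro j
      induction j with
      | zero => simpa using hzero (k+1)
      | succ j ihj =>
        obtain ⟨L, hL⟩ := ihj
        refine ⟨L+1, ?_⟩
        have hc : ((j+1 : ℕ) : ZMod (2^(k+1))) = ((j:ℕ) : ZMod (2^(k+1))) + 1 := by push_cast; ring
        rw [hc]
        exact hstep L _ _ hL (mem_targets_add_one _)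
    obtain ⟨L, hL⟩ := hind v.val
    exact ⟨L, by rwa [ZMod.natCast_rightInverse v] at hL⟩

-- ===== main theorem =====

theorem walk_positions_converge_and_harmonic_support_full
    (Ω : Type) [MeasurableSpace Ω] (P : Measure Ω) [IsProbabilityMeasure P]
    (X : ℕ → Ω → WVert) (hX : IsWalkW P X wroot) :
    ∃ Xinf : Ω → UnitAddCircle, Measurable Xinf ∧
      (∀ᵐ ω ∂P, Tendsto (fun t => wpos (X t ω)) atTop (𝓝 (Xinf ω))) ∧
      ∀ U : Set UnitAddCircle, IsOpen U → U.Nonempty → 0 < P.map Xinf U := by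
  classical
  obtain ⟨hXm, hX0, hXstep⟩ := hX
  set m : ℕ → WVert → ℝ≥0∞ := fun t u => P {ω | X t ω = u} with hm_def
  have hEvM : ∀ t u, MeasurableSet {ω | X t ω = u} := fun t u => hXm t (measurableSet_singleton u)
  have hrec : ∀ t w, m (t+1) w = ∑' u, wP u w * m t u := by
    intro t w
    have hU : {ω | X (t+1) ω = w} = ⋃ u, {ω | X (t+1) ω = w ∧ X t ω = u} := by
      ext ω
      simp only [Set.mem_setOf_eq, Set.mem_iUnion]
      exact ⟨fun h => ⟨X t ω, h, rfl⟩, fun ⟨u, h, _⟩ => h⟩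
    have hdisj : Pairwise (Function.onFun Disjoint fun u => {ω | X (t+1) ω = w ∧ X t ω = u}) := by
      intro a b hab
      refine Set.disjoint_left.mpr ?_
      rintro ω ⟨_, h1⟩ ⟨_, h2⟩
      exact hab (h1 ▸ h2 ▸ rfl)
    have hmeas : ∀ u, MeasurableSet {ω | X (t+1) ω = w ∧ X t ω = u} := by
      intro u
      have he : {ω | X (t+1) ω = w ∧ X t ω = u} = {ω | X (t+1) ω = w} ∩ {ω | X t ω = u} := rfl
      rw [he]; exact (hEvM _ _).inter (hEvM _ _)
    calc m (t+1) w = P (⋃ u, {ω | X (t+1) ω = w ∧ X t ω = u}) := by rw [hm_def, ← hU]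
      _ = ∑' u, P {ω | X (t+1) ω = w ∧ X t ω = u} := measure_iUnion hdisj hmeas
      _ = ∑' u, wP u w * m t u := tsum_congr fun u => hXstep t u w
  have hm0 : m 0 wroot = 1 := hX0
  have hm0' : ∀ u, u ≠ wroot → m 0 u = 0 := by
    intro u hu
    have hsub : {ω | X 0 ω = u} ⊆ {ω | X 0 ω = wroot}ᶜ := by
      intro ω h hmem
      simp only [Set.mem_setOf_eq] at h hmem
      exact hu (h ▸ hmem ▸ rfl)
    have hc : P {ω | X 0 ω = wroot}ᶜ = 0 := (prob_compl_eq_zero_iff (hEvM 0 wroot)).mpr hX0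
    exact le_antisymm (le_trans (measure_mono hsub) hc.le) zero_le
  set ρ : ℝ≥0∞ := 143/144 with hρ_def
  have hρ1 : ρ < 1 := by
    rw [hρ_def, ENNReal.div_lt_iff (Or.inl (by norm_num)) (Or.inl (by norm_num))]
    norm_num
  have hEf : ∀ t, ∑' u, fE u * m t u ≤ ρ^t * fE wroot := by
    intro t
    induction t with
    | zero =>
      rw [pow_zero, one_mul, tsum_eq_single wroot (fun u hu => by rw [hm0' u hu, mul_zero]),
        hm0, mul_one]
    | succ t ih =>
      have he : ∑' u, fE u * m (t+1) u = ∑' w, fE w * (∑' u, wP u w * m t u) :=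
        tsum_congr fun w => by rw [hrec]
      rw [he]
      calc ∑' w, fE w * (∑' u, wP u w * m t u) ≤ ρ * ∑' u, fE u * m t u :=
            step_exp (m t) fE ρ (fun u => fE_step u)
        _ ≤ ρ * (ρ^t * fE wroot) := mul_le_mul_right ih _
        _ = ρ^(t+1) * fE wroot := by rw [pow_succ]; ring
  have hlint : ∀ (t : ℕ) (g : WVert → ℝ≥0∞), ∫⁻ ω, g (X t ω) ∂P = ∑' u, g u * m t u := by
    intro t g
    rw [← lintegral_map (measurable_of_countable g) (hXm t), lintegral_countable']
    refine tsum_congr fun u => ?_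
    rw [Measure.map_apply (hXm t) (measurableSet_singleton u)]
    rfl
  set K : ℝ≥0∞ := fE wroot * 144 with hK_def
  have hKtop : K ≠ ⊤ := by rw [hK_def]; exact ENNReal.mul_ne_top (fE_ne_top _) (by norm_num)
  have hgeom : ∑' (s:ℕ), ρ^s = 144 := by
    rw [ENNReal.tsum_geometric]
    have h1 : (1:ℝ≥0∞) - ρ = 1/144 := by
      have h144 : ((144:ℝ≥0∞))/144 = 1 := ENNReal.div_self (by norm_num) (by norm_num)
      have hadd : (1:ℝ≥0∞)/144 + 143/144 = 1 := by
        rw [ENNReal.div_add_div_same, show (1:ℝ≥0∞)+143 = 144 by norm_num, h144]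
      rw [hρ_def]
      exact ENNReal.sub_eq_of_eq_add hρ1.ne_top hadd.symm
    rw [h1, one_div, inv_inv]
  have hSmeas : ∀ t : ℕ, Measurable fun ω => ∑' s, fE (X (t+s) ω) :=
    fun t => Measurable.ennreal_tsum (fun s => (measurable_of_countable fE).comp (hXm (t+s)))
  have hStail : ∀ t : ℕ, ∫⁻ ω, (∑' s, fE (X (t+s) ω)) ∂P ≤ ρ^t * K := by
    intro t
    have hrw := lintegral_tsum (μ := P) (f := fun s ω => fE (X (t+s) ω))
      (fun s => ((measurable_of_countable fE).comp (hXm (t+s))).aemeasurable)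
    rw [hrw]
    calc ∑' s, ∫⁻ ω, fE (X (t+s) ω) ∂P = ∑' s, ∑' u, fE u * m (t+s) u :=
          tsum_congr fun s => hlint _ _
      _ ≤ ∑' (s:ℕ), ρ^(t+s) * fE wroot := ENNReal.tsum_le_tsum fun s => hEf _
      _ = (ρ^t * fE wroot) * ∑' (s:ℕ), ρ^s := by
          rw [← ENNReal.tsum_mul_left]
          exact tsum_congr fun s => by rw [pow_add]; ring
      _ = ρ^t * K := by rw [hgeom, hK_def]; ring
  have hallowed : ∀ᵐ ω ∂P, ∀ t, X (t+1) ω ∈ wTargets (X t ω) := by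
    rw [ae_all_iff]
    intro t
    rw [ae_iff]
    have hsub : {ω | ¬ X (t+1) ω ∈ wTargets (X t ω)} ⊆
        ⋃ p : WVert × WVert,
          (if p.2 ∈ wTargets p.1 then (∅ : Set Ω) else {ω | X (t+1) ω = p.2 ∧ X t ω = p.1}) := by
      intro ω hω
      refine Set.mem_iUnion.mpr ⟨(X t ω, X (t+1) ω), ?_⟩
      rw [if_neg hω]
      exact ⟨rfl, rfl⟩
    refine le_antisymm (le_trans (measure_mono hsub) ?_) zero_le
    refine le_trans (measure_iUnion_le _) ?_
    have hz : ∀ p : WVert × WVert,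
        P (if p.2 ∈ wTargets p.1 then (∅ : Set Ω) else {ω | X (t+1) ω = p.2 ∧ X t ω = p.1}) = 0 := by
      rintro ⟨u, w⟩
      dsimp only
      split_ifs with h
      · simp
      · rw [hXstep t u w, wP_zero h, zero_mul]
    rw [tsum_congr hz]
    simp
  have hsumfin : ∀ᵐ ω ∂P, (∑' s, fE (X s ω)) < ⊤ := by
    have h0 := ae_lt_top (hSmeas 0) (lt_of_le_of_lt (hStail 0) (by
      rw [pow_zero, one_mul]
      exact lt_of_le_of_ne le_top hKtop)).ne
    filter_upwards [h0] with ω hω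
    simpa using hω
  have hsummable_of : ∀ ω, (∑' s, fE (X s ω)) < ⊤ → Summable (fun t => ((fNN (X t ω) : ℝ))) := by
    intro ω hfin
    refine NNReal.summable_coe.mpr ?_
    rw [← ENNReal.tsum_coe_ne_top_iff_summable]
    exact hfin.ne
  have hd_of : ∀ ω, (∀ t, X (t+1) ω ∈ wTargets (X t ω)) →
      ∀ t, dist (wpos (X t ω)) (wpos (X (t+1) ω)) ≤ ((fNN (X t ω) : ℝ)) := by
    intro ω hall t
    rw [dist_comm]
    exact le_trans (wpos_step (hall t)) (half_pow_le_fNN _)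
  have hconv : ∀ᵐ ω ∂P, ∃ l, Tendsto (fun t => wpos (X t ω)) atTop (𝓝 l) := by
    filter_upwards [hallowed, hsumfin] with ω hall hfin
    exact cauchySeq_tendsto_of_complete
      (cauchySeq_of_dist_le_of_summable _ (hd_of ω hall) (hsummable_of ω hfin))
  obtain ⟨Xinf, hXinfM, hXinfT⟩ := measurable_limit_of_tendsto_metrizable_ae
    (fun t => ((measurable_of_countable wpos).comp (hXm t)).aemeasurable) hconv
  refine ⟨Xinf, hXinfM, hXinfT, ?_⟩
  have htailae : ∀ t : ℕ, ∀ᵐ ω ∂P, edist (Xinf ω) (wpos (X t ω)) ≤ ∑' s, fE (X (t+s) ω) := by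
    intro t
    filter_upwards [hallowed, hsumfin, hXinfT] with ω hall hfin hT
    have hsum := hsummable_of ω hfin
    have hdist := dist_le_tsum_of_dist_le_of_tendsto _ (hd_of ω hall) hsum hT t
    rw [edist_dist, dist_comm]
    have hsum' : Summable (fun s : ℕ => ((fNN (X (t+s) ω) : ℝ))) :=
      hsum.comp_injective (add_right_injective t)
    calc ENNReal.ofReal (dist (wpos (X t ω)) (Xinf ω))
        ≤ ENNReal.ofReal (∑' s : ℕ, ((fNN (X (t+s) ω) : ℝ))) := ENNReal.ofReal_le_ofReal hdist
      _ = ∑' s : ℕ, ENNReal.ofReal ((fNN (X (t+s) ω) : ℝ)) :=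
          ENNReal.ofReal_tsum_of_nonneg (fun s => NNReal.coe_nonneg _) hsum'
      _ = ∑' s, fE (X (t+s) ω) := tsum_congr fun s => ENNReal.ofReal_coe_nnreal
  have htailP : ∀ (t : ℕ) (δ' : ℝ≥0∞), δ' ≠ 0 → δ' ≠ ⊤ →
      P {ω | δ' ≤ edist (Xinf ω) (wpos (X t ω))} ≤ ρ^t * K / δ' := by
    intro t δ' h0 htop
    have hmono : P {ω | δ' ≤ edist (Xinf ω) (wpos (X t ω))}
        ≤ P {ω | δ' ≤ ∑' s, fE (X (t+s) ω)} := by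
      refine measure_mono_ae ?_
      filter_upwards [htailae t] with ω h hmem
      exact le_trans hmem h
    refine le_trans hmono ?_
    rw [ENNReal.le_div_iff_mul_le (Or.inl h0) (Or.inl htop)]
    calc P {ω | δ' ≤ ∑' s, fE (X (t+s) ω)} * δ'
        = δ' * P {ω | δ' ≤ ∑' s, fE (X (t+s) ω)} := mul_comm _ _
      _ ≤ ∫⁻ ω, (∑' s, fE (X (t+s) ω)) ∂P := mul_meas_ge_le_lintegral₀ (hSmeas t).aemeasurable δ'
      _ ≤ ρ^t * K := hStail t
  -- ===== support part =====
  intro U hU hUne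
  obtain ⟨q₀, hq₀⟩ := hUne
  obtain ⟨ε, hε, hball⟩ := Metric.isOpen_iff.mp hU q₀ hq₀
  obtain ⟨x, hx⟩ := QuotientAddGroup.mk_surjective q₀
  set y : ℝ := Int.fract x with hy_def
  have hy0 : 0 ≤ y := Int.fract_nonneg x
  have hy1 : y < 1 := Int.fract_lt_one x
  have hyq : ((y : ℝ) : UnitAddCircle) = q₀ := by
    have hxy : x = y + (⌊x⌋ : ℤ) := by rw [hy_def, Int.fract]; ring
    rw [← hx, hxy, circle_coe_int_add]
  -- choose n
  have hmin : (0:ℝ) < min (ε/4) (ε/1248) := by positivity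
  obtain ⟨n, hn⟩ := exists_pow_lt_of_lt_one hmin (by norm_num : (3:ℝ)/4 < 1)
  have hn1 : ((3:ℝ)/4)^n < ε/4 := lt_of_lt_of_le hn (min_le_left _ _)
  have hn2 : ((3:ℝ)/4)^n < ε/1248 := lt_of_lt_of_le hn (min_le_right _ _)
  -- dyadic vertex
  set k : ℕ := (⌊y * 2^n⌋).toNat with hk_def
  have hfl0 : (0:ℤ) ≤ ⌊y * 2^n⌋ := Int.floor_nonneg.mpr (by positivity)
  have hkr : ((k:ℝ)) = (⌊y * 2^n⌋ : ℤ) := by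
    rw [hk_def]
    exact_mod_cast congrArg (fun z : ℤ => (z:ℝ)) (Int.toNat_of_nonneg hfl0)
  have hkle : ((k:ℝ)) ≤ y * 2^n := by rw [hkr]; exact Int.floor_le _
  have hklt : y * 2^n < (k:ℝ) + 1 := by rw [hkr]; exact Int.lt_floor_add_one _
  have hklt2 : k < 2^n := by
    have h2 : y * 2^n < 2^n := by
      have : (0:ℝ) < 2^n := by positivity
      nlinarith
    have : ((k:ℝ)) < ((2^n : ℕ) : ℝ) := by push_cast; linarith
    exact_mod_cast this
  set ustar : WVert := ⟨n, ((k:ℕ) : ZMod (2^n))⟩ with hustar_def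
  set qs : UnitAddCircle := wpos ustar with hqs_def
  have hwq : qs = (((k:ℝ)/(2:ℝ)^n : ℝ) : UnitAddCircle) :=
    wpos_of_val _ k (ZMod.val_natCast _ _)
  have hqdist : dist qs q₀ < ε/4 := by
    rw [hwq, ← hyq]
    refine lt_of_le_of_lt (circle_dist_coe _ _) ?_
    have h2pos : (0:ℝ) < 2^n := by positivity
    have hpos2 : (0:ℝ) < 1/2^n := by positivity
    have hky1 : (k:ℝ)/2^n ≤ y := by rw [div_le_iff₀ h2pos]; linarith
    have hky2 : y - (k:ℝ)/2^n < 1/2^n := by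
      have hy3 : y < ((k:ℝ)+1)/2^n := by rw [lt_div_iff₀ h2pos]; linarith
      have hsplit : ((k:ℝ)+1)/2^n = (k:ℝ)/2^n + 1/2^n := by ring
      linarith
    have habs : |(k:ℝ)/(2:ℝ)^n - y| ≤ 1/2^n := by
      rw [abs_le]
      constructor <;> linarith
    refine lt_of_le_of_lt habs ?_
    have : (1:ℝ)/2^n ≤ (3/4:ℝ)^n := by
      rw [show (1:ℝ)/2^n = (1/2:ℝ)^n by rw [div_pow, one_pow]]
      exact pow_le_pow_left₀ (by norm_num) (by norm_num) n
    linarith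
  -- reach ustar
  obtain ⟨L, hL⟩ := reach_aux m hrec (by rw [hm0]; norm_num) ustar
  set α : ℝ≥0∞ := m L ustar with hα_def
  have hα1 : α ≤ 1 := by rw [hα_def]; exact prob_le_one
  have hαtop : α ≠ ⊤ := (lt_of_le_of_lt hα1 (by norm_num)).ne
  -- mu sequence facts
  set μ : ℕ → WVert → ℝ≥0∞ := muSeq ustar with hμ_def
  have hμ0 : ∀ u, μ 0 u = if u = ustar then 1 else 0 := fun u => rfl
  have hμrec : ∀ s w, μ (s+1) w = ∑' u, wP u w * μ s u := fun s w => rfl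
  have hμtot : ∀ s, ∑' u, μ s u = 1 := by
    intro s
    induction s with
    | zero =>
      rw [tsum_eq_single ustar (fun u hu => by rw [hμ0, if_neg hu])]
      rw [hμ0, if_pos rfl]
    | succ s ih =>
      rw [tsum_congr (fun w => hμrec s w), step_total, ih]
  have hμG : ∀ s, ∑' u, potG qs u * μ s u ≤ 144 * fE ustar := by
    intro s
    induction s with
    | zero =>
      rw [tsum_eq_single ustar (fun u hu => by rw [hμ0, if_neg hu, mul_zero])]
      rw [hμ0, if_pos rfl, mul_one, potG, hqs_def, edist_self, zero_add]
    | succ s ih =>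
      have he : ∑' w, potG qs w * μ (s+1) w = ∑' w, potG qs w * (∑' u, wP u w * μ s u) :=
        tsum_congr fun w => by rw [hμrec]
      rw [he]
      refine le_trans (step_exp (μ s) (potG qs) 1
        (fun u => by rw [one_mul]; exact potG_superharmonic qs u)) ?_
      rw [one_mul]
      exact ih
  have hμm : ∀ s w, α * μ s w ≤ m (L + s) w := by
    intro s
    induction s with
    | zero =>
      intro w
      rw [hμ0]
      split_ifs with h
      · rw [mul_one, Nat.add_zero, h, hα_def]
      · rw [mul_zero]; exact zero_le
    | succ s ih =>
      intro w
      have he : m (L + (s+1)) w = ∑' u, wP u w * m (L + s) u := hrec (L+s) w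
      rw [he, hμrec]
      calc α * ∑' u, wP u w * μ s u = ∑' u, wP u w * (α * μ s u) := by
            rw [← ENNReal.tsum_mul_left]
            exact tsum_congr fun u => by ring
        _ ≤ ∑' u, wP u w * m (L + s) u :=
            ENNReal.tsum_le_tsum fun u => mul_le_mul_right (ih u) _
  -- event identity
  have hPev : ∀ (t : ℕ) (c : WVert → Prop),
      P {ω | c (X t ω)} = ∑' u, (if c u then m t u else 0) := by
    intro t c
    have hU2 : {ω | c (X t ω)} = ⋃ u, {ω | X t ω = u ∧ c u} := by
      ext ω
      simp only [Set.mem_setOf_eq, Set.mem_iUnion]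
      constructor
      · intro h
        exact ⟨X t ω, rfl, h⟩
      · rintro ⟨u, hu, hcu⟩
        rwa [hu]
    have hkey : ∀ u, {ω | X t ω = u ∧ c u} = if c u then {ω | X t ω = u} else ∅ := by
      intro u
      split_ifs with h
      · ext ω; simp [h]
      · ext ω; simp [h]
    have hdisj : Pairwise (Function.onFun Disjoint fun u => {ω | X t ω = u ∧ c u}) := by
      intro a b hab
      refine Set.disjoint_left.mpr ?_
      rintro ω ⟨h1, _⟩ ⟨h2, _⟩
      exact hab (h1 ▸ h2 ▸ rfl)
    have hmeas2 : ∀ u, MeasurableSet {ω | X t ω = u ∧ c u} := by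
      intro u
      rw [hkey u]
      split_ifs
      · exact hEvM t u
      · exact MeasurableSet.empty
    rw [hU2, measure_iUnion hdisj hmeas2]
    refine tsum_congr fun u => ?_
    rw [hkey u]
    split_ifs
    · rfl
    · exact measure_empty
  -- far/near analysis
  set δ : ℝ≥0∞ := ENNReal.ofReal (ε/4) with hδ_def
  have hδ0 : δ ≠ 0 := by
    rw [hδ_def]
    exact (ENNReal.ofReal_pos.mpr (by positivity)).ne'
  have hδtop : δ ≠ ⊤ := ENNReal.ofReal_ne_top
  have hfEbound : (144:ℝ≥0∞) * fE ustar ≤ ENNReal.ofReal (156 * (3/4:ℝ)^n) := by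
    have h1 : fE ustar ≤ ((13/12 * (3/4:ℝ≥0)^n : ℝ≥0) : ℝ≥0∞) := by
      rw [fE]
      exact ENNReal.coe_le_coe.mpr (fNN_le ustar)
    calc (144:ℝ≥0∞) * fE ustar ≤ 144 * ((13/12 * (3/4:ℝ≥0)^n : ℝ≥0) : ℝ≥0∞) :=
          mul_le_mul_right h1 _
      _ = (((144 * (13/12 * (3/4:ℝ≥0)^n) : ℝ≥0)) : ℝ≥0∞) := by
          rw [ENNReal.coe_mul]
          norm_num
      _ = ENNReal.ofReal (((144 * (13/12 * (3/4:ℝ≥0)^n) : ℝ≥0) : ℝ)) :=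
          ENNReal.ofReal_coe_nnreal.symm
      _ = ENNReal.ofReal (156 * (3/4:ℝ)^n) := by
          congr 1
          push_cast
          ring
  have hfarhalf : (144:ℝ≥0∞) * fE ustar / δ ≤ 1/2 := by
    rw [ENNReal.div_le_iff_le_mul (Or.inl hδ0) (Or.inl hδtop)]
    refine le_trans hfEbound ?_
    rw [hδ_def]
    have h8 : (1:ℝ≥0∞)/2 * ENNReal.ofReal (ε/4) = ENNReal.ofReal (ε/8) := by
      rw [show (ε/4 : ℝ) = 2 * (ε/8) by ring, ENNReal.ofReal_mul (by norm_num), ← mul_assoc,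
        ENNReal.ofReal_ofNat, one_div, ENNReal.inv_mul_cancel (by norm_num) (by norm_num), one_mul]
    rw [h8]
    refine ENNReal.ofReal_le_ofReal ?_
    nlinarith [hn2, hε]
  have hnear : ∀ s, α/2 ≤ P {ω | ¬ (δ ≤ edist (wpos (X (L+s) ω)) qs)} := by
    intro s
    set c : WVert → Prop := fun u => ¬ (δ ≤ edist (wpos u) qs) with hc_def
    rw [hPev (L+s) c]
    -- split mass
    have hsplit : (1:ℝ≥0∞) = (∑' u, (if c u then μ s u else 0)) + ∑' u, (if c u then 0 else μ s u) := by
      rw [← ENNReal.tsum_add]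
      rw [← hμtot s]
      exact tsum_congr fun u => by split_ifs <;> simp
    have hB : ∑' u, (if c u then 0 else μ s u) ≤ 1/2 := by
      have hB1 : δ * ∑' u, (if c u then 0 else μ s u) ≤ ∑' u, potG qs u * μ s u := by
        rw [← ENNReal.tsum_mul_left]
        refine ENNReal.tsum_le_tsum fun u => ?_
        split_ifs with h
        · simp
        · rw [hc_def] at h
          push_neg at h
          calc δ * μ s u ≤ edist (wpos u) qs * μ s u := mul_le_mul_left h _
            _ ≤ potG qs u * μ s u := mul_le_mul_left (le_add_right le_rfl) _
      have hB2 : δ * ∑' u, (if c u then 0 else μ s u) ≤ 144 * fE ustar :=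
        le_trans hB1 (hμG s)
      calc ∑' u, (if c u then 0 else μ s u) ≤ 144 * fE ustar / δ := by
            rw [ENNReal.le_div_iff_mul_le (Or.inl hδ0) (Or.inl hδtop)]
            rw [mul_comm]
            exact hB2
        _ ≤ 1/2 := hfarhalf
    have hA : (1:ℝ≥0∞)/2 ≤ ∑' u, (if c u then μ s u else 0) := by
      have h1 : (1:ℝ≥0∞) ≤ (∑' u, (if c u then μ s u else 0)) + 1/2 :=
        le_trans hsplit.le (add_le_add_right hB _)
      have h2 : (1:ℝ≥0∞) - 1/2 ≤ ∑' u, (if c u then μ s u else 0) :=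
        tsub_le_iff_right.mpr h1
      have h3 : (1:ℝ≥0∞) - 1/2 = 1/2 := by
        refine ENNReal.sub_eq_of_eq_add (by norm_num) ?_
        rw [ENNReal.div_add_div_same, show (1:ℝ≥0∞)+1 = 2 by norm_num,
          ENNReal.div_self (by norm_num) (by norm_num)]
      rwa [h3] at h2
    have hfin2 : ∑' u, (if c u then α * μ s u else 0) ≤ ∑' u, (if c u then m (L+s) u else 0) := by
      refine ENNReal.tsum_le_tsum fun u => ?_
      by_cases h : c u
      · rw [if_pos h, if_pos h]
        exact hμm s u
      · rw [if_neg h, if_neg h]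
    have hfin1 : α * ∑' u, (if c u then μ s u else 0) = ∑' u, (if c u then α * μ s u else 0) := by
      rw [← ENNReal.tsum_mul_left]
      refine tsum_congr fun u => ?_
      by_cases h : c u
      · rw [if_pos h, if_pos h]
      · rw [if_neg h, if_neg h, mul_zero]
    have hfinal : α/2 ≤ ∑' u, (if c u then m (L+s) u else 0) :=
      calc α/2 = α * (1/2) := by rw [div_eq_mul_inv, one_div]
        _ ≤ α * ∑' u, (if c u then μ s u else 0) := mul_le_mul_right hA _
        _ = ∑' u, (if c u then α * μ s u else 0) := hfin1
        _ ≤ ∑' u, (if c u then m (L+s) u else 0) := hfin2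
    refine le_trans hfinal (le_of_eq (tsum_congr fun u => ?_))
    by_cases h : c u
    · rw [if_pos h, if_pos h]
    · rw [if_neg h, if_neg h]
  -- positivity of α
  have hαpos : 0 < α := hL
  -- choose s with small tail
  set δ2 : ℝ≥0∞ := ENNReal.ofReal (ε/2) with hδ2_def
  have hδ20 : δ2 ≠ 0 := by
    rw [hδ2_def]
    exact (ENNReal.ofReal_pos.mpr (by positivity)).ne'
  have hδ2top : δ2 ≠ ⊤ := ENNReal.ofReal_ne_top
  have hα4pos : 0 < α/4 := ENNReal.div_pos hαpos.ne' (by norm_num)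
  have hlim : Tendsto (fun t : ℕ => ρ^t * K / δ2) atTop (𝓝 0) := by
    have heq : ∀ t : ℕ, ρ^t * K / δ2 = ρ^t * (K / δ2) := fun t => by
      rw [div_eq_mul_inv, div_eq_mul_inv, mul_assoc]
    simp only [heq]
    have h0 := ENNReal.Tendsto.mul_const (ENNReal.tendsto_pow_atTop_nhds_zero_of_lt_one hρ1)
      (Or.inr (ENNReal.div_lt_top hKtop hδ20).ne)
    simpa using h0
  have hev : ∀ᶠ t : ℕ in atTop, ρ^t * K / δ2 < α/4 := hlim.eventually (gt_mem_nhds hα4pos)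
  obtain ⟨t, htb, htL⟩ := (hev.and (eventually_ge_atTop L)).exists
  set s : ℕ := t - L with hs_def
  have hts : t = L + s := by omega
  -- final assembly
  set A : Set Ω := {ω | ¬ (δ ≤ edist (wpos (X (L+s) ω)) qs)} with hA_def
  set B : Set Ω := {ω | δ2 ≤ edist (Xinf ω) (wpos (X (L+s) ω))} with hB_def
  have hPA : α/2 ≤ P A := hnear s
  have hPB : P B < α/4 := by
    refine lt_of_le_of_lt (htailP (L+s) δ2 hδ20 hδ2top) ?_
    rw [← hts]
    exact htb
  have hsub : A ⊆ B ∪ (Xinf ⁻¹' U) := by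
    intro ω hω
    by_cases hωB : ω ∈ B
    · exact Or.inl hωB
    · right
      rw [hA_def, Set.mem_setOf_eq, not_le] at hω
      rw [hB_def, Set.mem_setOf_eq, not_le] at hωB
      have hd1 : dist (wpos (X (L+s) ω)) qs < ε/4 := by
        rw [hδ_def] at hω
        rw [← edist_lt_ofReal]
        exact hω
      have hd2 : dist (Xinf ω) (wpos (X (L+s) ω)) < ε/2 := by
        rw [hδ2_def] at hωB
        rw [← edist_lt_ofReal]
        exact hωB
      have : dist (Xinf ω) q₀ < ε := by
        calc dist (Xinf ω) q₀ ≤ dist (Xinf ω) (wpos (X (L+s) ω)) + dist (wpos (X (L+s) ω)) qs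
              + dist qs q₀ := dist_triangle4 _ _ _ _
          _ < ε/2 + ε/4 + ε/4 := by linarith [hqdist]
          _ = ε := by ring
      exact Set.mem_preimage.mpr (hball (Metric.mem_ball.mpr this))
  have hPU : 0 < P (Xinf ⁻¹' U) := by
    by_contra hcon
    push_neg at hcon
    have hP0 : P (Xinf ⁻¹' U) = 0 := le_antisymm hcon zero_le
    have hcontr : α/2 ≤ α/4 := by
      calc α/2 ≤ P A := hPA
        _ ≤ P (B ∪ (Xinf ⁻¹' U)) := measure_mono hsub
        _ ≤ P B + P (Xinf ⁻¹' U) := measure_union_le _ _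
        _ = P B := by rw [hP0, add_zero]
        _ ≤ α/4 := hPB.le
    have hafin : α/4 ≠ ⊤ := (ENNReal.div_lt_top hαtop (by norm_num)).ne
    have hmono := ENNReal.toReal_mono hafin hcontr
    rw [ENNReal.toReal_div, ENNReal.toReal_div] at hmono
    have ha0 : 0 < α.toReal := ENNReal.toReal_pos hαpos.ne' hαtop
    norm_num at hmono
    linarith
  rw [Measure.map_apply hXinfM hU.measurableSet]
  exact hPU
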